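/- arXiv:2604.10241 — 2 statements merged into one kernel-verified Lean document; each statement's English description precedes it below -/
import Mathlib

section
/- (Existence and uniqueness of the SU-decomposition) Let Ξ ∈ ℝ^{6×3} with upper 3×3 block A and lower 3×3 block B, whose first column of A is nonzero and whose first two columns of A are linearly independent. Then there exist a unique pair (R, p) with R ∈ SO(3), p ∈ ℝ³, and a unique 6×3 matrix U = [U₁; U₂] with U₁, U₂ both 3×3 upper-triangular and (U₁)₁₁ > 0, (U₁)₂₂ > 0, such that A = R U₁ and B = [p]× R U₁ + R U₂. -/
/-!
Two decompositions `R U₁ = R' U₁'` give a rotation `Q = R'ᵀ R` with `Q U₁ = U₁'`. Comparing columns,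
`Q e₀` and then `Q e₁` are positive multiples of `e₀` and `e₁` of length one, and `det Q = 1` forces
`Q = 1`. A decomposition exists with `R` the oriented frame `(r₀, r₂ × r₀, r₂)`, where
`r₀ = a₀/|a₀|` and `r₂ = (a₀ × a₁)/|a₀ × a₁|` come from the first two columns of `A`, and `U₁ = Rᵀ A`.

Since `R` preserves cross products, `[p]× R = R [Rᵀp]×`, so with `q = Rᵀp` the second equation
reads `Rᵀ B = [q]× U₁ + U₂`. The strictly lower entries of `[q]× U₁` are `q₂ u₀₀`, `-q₁ u₀₀` and
`q₀ u₁₁ - q₁ u₀₁`, a triangular system for `q` with nonzero pivots, so `q` is unique, and `U₂` is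
what is left over.
-/

open Matrix

/-- Cross product in ℝ³. -/
def cross3 (a b : Fin 3 → ℝ) : Fin 3 → ℝ :=
  ![a 1 * b 2 - a 2 * b 1, a 2 * b 0 - a 0 * b 2, a 0 * b 1 - a 1 * b 0]

/-- Euclidean norm in ℝ³. -/
noncomputable def enorm3 (v : Fin 3 → ℝ) : ℝ := Real.sqrt (∑ i, v i ^ 2)

/-- Dot product in ℝ³. -/
def dot3 (a b : Fin 3 → ℝ) : ℝ := ∑ i, a i * b i

/-- Membership in SO(3). -/
def SO3 (R : Matrix (Fin 3) (Fin 3) ℝ) : Prop := Rᵀ * R = 1 ∧ R.det = 1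

/-- Skew-symmetric cross-product matrix [p]×. -/
def skew3 (p : Fin 3 → ℝ) : Matrix (Fin 3) (Fin 3) ℝ :=
  !![0, -p 2, p 1; p 2, 0, -p 0; -p 1, p 0, 0]

/-- The 6×6 screw-transformation matrix S(R,p) = [[R,0],[[p]×R,R]]. -/
def Scr (R : Matrix (Fin 3) (Fin 3) ℝ) (p : Fin 3 → ℝ) :
    Matrix (Fin 3 ⊕ Fin 3) (Fin 3 ⊕ Fin 3) ℝ :=
  Matrix.fromBlocks R 0 (skew3 p * R) R

/-- Upper-triangular 3×3 matrix. -/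
def UT3 (M : Matrix (Fin 3) (Fin 3) ℝ) : Prop :=
  ∀ i j : Fin 3, (j : ℕ) < (i : ℕ) → M i j = 0

theorem UT3_iff {M : Matrix (Fin 3) (Fin 3) ℝ} : UT3 M ↔ M 1 0 = 0 ∧ M 2 0 = 0 ∧ M 2 1 = 0 := by
  refine ⟨fun h => ⟨h 1 0 (by decide), h 2 0 (by decide), h 2 1 (by decide)⟩, ?_⟩
  rintro ⟨h₁₀, h₂₀, h₂₁⟩ i j hij
  fin_cases i <;> fin_cases j <;> first | assumption | simp at hij

theorem skew3_mulVec (p v : Fin 3 → ℝ) : skew3 p *ᵥ v = p ⨯₃ v := by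
  ext i
  fin_cases i <;> simp [skew3, cross_apply, mulVec, dotProduct, Fin.sum_univ_three] <;> ring

theorem crossProduct_mulVec_mulVec {R : Type*} [CommRing R] (M : Matrix (Fin 3) (Fin 3) R)
    (u v : Fin 3 → R) : (M *ᵥ u) ⨯₃ (M *ᵥ v) = (adjugate M)ᵀ *ᵥ (u ⨯₃ v) := by
  ext i
  fin_cases i <;>
    simp [adjugate_fin_three, cross_apply, mulVec, dotProduct, Fin.sum_univ_three] <;> ring

namespace SO3

variable {R : Matrix (Fin 3) (Fin 3) ℝ}

theorem mul_transpose (hR : SO3 R) : R * Rᵀ = 1 := mul_eq_one_comm.mp hR.1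

theorem adjugate_eq (hR : SO3 R) : adjugate R = Rᵀ :=
  calc adjugate R = Rᵀ * R * adjugate R := by rw [hR.1, Matrix.one_mul]
    _ = Rᵀ := by rw [Matrix.mul_assoc, mul_adjugate, hR.2, one_smul, Matrix.mul_one]

theorem mulVec_cross (hR : SO3 R) (u v : Fin 3 → ℝ) :
    R *ᵥ (u ⨯₃ v) = (R *ᵥ u) ⨯₃ (R *ᵥ v) := by
  rw [crossProduct_mulVec_mulVec, hR.adjugate_eq, transpose_transpose]

theorem skew3_mul (hR : SO3 R) (p : Fin 3 → ℝ) : skew3 p * R = R * skew3 (Rᵀ *ᵥ p) := by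
  refine ext_iff_mulVec.mpr fun v => ?_
  rw [← mulVec_mulVec, ← mulVec_mulVec, skew3_mulVec, skew3_mulVec, hR.mulVec_cross,
    mulVec_mulVec, hR.mul_transpose, one_mulVec]

theorem eq_mul_iff (hR : SO3 R) {A U : Matrix (Fin 3) (Fin 3) ℝ} : A = R * U ↔ Rᵀ * A = U := by
  constructor
  · rintro rfl
    rw [← Matrix.mul_assoc, hR.1, Matrix.one_mul]
  · rintro rfl
    rw [← Matrix.mul_assoc, hR.mul_transpose, Matrix.one_mul]

theorem eq_skew3_mul_mul_add_iff (hR : SO3 R) {B U V : Matrix (Fin 3) (Fin 3) ℝ}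
    {p : Fin 3 → ℝ} :
    B = skew3 p * R * U + R * V ↔ Rᵀ * B = skew3 (Rᵀ *ᵥ p) * U + V := by
  rw [hR.skew3_mul, Matrix.mul_assoc, ← Matrix.mul_add, hR.eq_mul_iff]

theorem transpose_mul (hR : SO3 R) {R' : Matrix (Fin 3) (Fin 3) ℝ} (hR' : SO3 R') :
    SO3 (R'ᵀ * R) := by
  refine ⟨?_, ?_⟩
  · rw [Matrix.transpose_mul, transpose_transpose, Matrix.mul_assoc, ← Matrix.mul_assoc R',
      hR'.mul_transpose, Matrix.one_mul, hR.1]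
  · rw [det_mul, det_transpose, hR.2, hR'.2, one_mul]

theorem eq_one_of_mul_UT3 (hR : SO3 R) {U U' : Matrix (Fin 3) (Fin 3) ℝ} (hU : UT3 U)
    (hU' : UT3 U') (h₀ : 0 < U 0 0) (h₁ : 0 < U 1 1) (h₀' : 0 < U' 0 0) (h₁' : 0 < U' 1 1)
    (hRU : R * U = U') : R = 1 := by
  obtain ⟨u₁₀, u₂₀, u₂₁⟩ := UT3_iff.mp hU
  obtain ⟨u₁₀', u₂₀', u₂₁'⟩ := UT3_iff.mp hU'
  have col (i j : Fin 3) : R i 0 * U 0 j + R i 1 * U 1 j + R i 2 * U 2 j = U' i j := by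
    rw [← hRU, Matrix.mul_apply, Fin.sum_univ_three]
  have orth (i j : Fin 3) :
      R 0 i * R 0 j + R 1 i * R 1 j + R 2 i * R 2 j = (1 : Matrix (Fin 3) (Fin 3) ℝ) i j := by
    rw [← hR.1, Matrix.mul_apply, Fin.sum_univ_three]; rfl
  have hdet := hR.2
  rw [det_fin_three] at hdet
  have r₁₀ : R 1 0 = 0 := by simpa [u₁₀, u₂₀, u₁₀', h₀.ne'] using col 1 0
  have r₂₀ : R 2 0 = 0 := by simpa [u₁₀, u₂₀, u₂₀', h₀.ne'] using col 2 0
  have r₀₀ : R 0 0 = 1 := by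
    have hcol : R 0 0 * U 0 0 = U' 0 0 := by simpa [u₁₀, u₂₀] using col 0 0
    have hpos : 0 < R 0 0 := pos_of_mul_pos_left (hcol ▸ h₀') h₀.le
    have hsq : R 0 0 * R 0 0 = 1 := by simpa [r₁₀, r₂₀] using orth 0 0
    exact (mul_self_eq_one_iff.mp hsq).resolve_right (by linarith)
  have r₂₁ : R 2 1 = 0 := by simpa [r₂₀, u₂₁, u₂₁', h₁.ne'] using col 2 1
  have r₀₁ : R 0 1 = 0 := by simpa [r₀₀, r₁₀, r₂₀] using orth 0 1
  have r₁₁ : R 1 1 = 1 := by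
    have hcol : R 1 1 * U 1 1 = U' 1 1 := by simpa [r₁₀, u₂₁] using col 1 1
    have hpos : 0 < R 1 1 := pos_of_mul_pos_left (hcol ▸ h₁') h₁.le
    have hsq : R 1 1 * R 1 1 = 1 := by simpa [r₀₁, r₂₁] using orth 1 1
    exact (mul_self_eq_one_iff.mp hsq).resolve_right (by linarith)
  have r₀₂ : R 0 2 = 0 := by simpa [r₀₀, r₁₀, r₂₀] using orth 0 2
  have r₁₂ : R 1 2 = 0 := by simpa [r₀₁, r₁₁, r₂₁] using orth 1 2
  have r₂₂ : R 2 2 = 1 := by simpa [r₀₀, r₀₁, r₀₂, r₁₀, r₁₁, r₁₂, r₂₀, r₂₁] using hdet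
  ext i j
  fin_cases i <;> fin_cases j <;> simp [*]

theorem eq_of_mul_eq_mul (hR : SO3 R) {R' U U' : Matrix (Fin 3) (Fin 3) ℝ} (hR' : SO3 R')
    (hU : UT3 U) (hU' : UT3 U') (h₀ : 0 < U 0 0) (h₁ : 0 < U 1 1) (h₀' : 0 < U' 0 0)
    (h₁' : 0 < U' 1 1) (h : R * U = R' * U') : R = R' := by
  have hQ : R'ᵀ * R * U = U' := by
    rw [Matrix.mul_assoc, h, ← Matrix.mul_assoc, hR'.1, Matrix.one_mul]
  calc R = R' * (R'ᵀ * R) := by rw [← Matrix.mul_assoc, hR'.mul_transpose, Matrix.one_mul]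
    _ = R' := by rw [(hR.transpose_mul hR').eq_one_of_mul_UT3 hU hU' h₀ h₁ h₀' h₁' hQ,
      Matrix.mul_one]

end SO3

section OrientedFrame

variable {n : Type*} [Fintype n]

theorem dotProduct_self_pos {R : Type*} [Ring R] [LinearOrder R] [IsStrictOrderedRing R]
    {v : n → R} (hv : v ≠ 0) : 0 < v ⬝ᵥ v :=
  lt_of_le_of_ne (Finset.sum_nonneg fun _ _ => mul_self_nonneg _)
    (Ne.symm (dotProduct_self_eq_zero.not.mpr hv))

noncomputable def unitVec (v : n → ℝ) : n → ℝ := (√(v ⬝ᵥ v))⁻¹ • v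

theorem dotProduct_unitVec (v : n → ℝ) : v ⬝ᵥ unitVec v = √(v ⬝ᵥ v) := by
  rw [unitVec, dotProduct_smul, smul_eq_mul, ← div_eq_inv_mul, Real.div_sqrt]

theorem unitVec_dotProduct_self {v : n → ℝ} (hv : v ≠ 0) : unitVec v ⬝ᵥ unitVec v = 1 := by
  have hpos := dotProduct_self_pos hv
  change ((√(v ⬝ᵥ v))⁻¹ • v) ⬝ᵥ unitVec v = 1
  rw [smul_dotProduct, dotProduct_unitVec, smul_eq_mul,
    inv_mul_cancel₀ (Real.sqrt_pos.mpr hpos).ne']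

noncomputable def orientedFrame (a b : Fin 3 → ℝ) : Matrix (Fin 3) (Fin 3) ℝ :=
  (of ![unitVec a, unitVec (a ⨯₃ b) ⨯₃ unitVec a, unitVec (a ⨯₃ b)])ᵀ

theorem SO3_orientedFrame {a b : Fin 3 → ℝ} (h : a ⨯₃ b ≠ 0) : SO3 (orientedFrame a b) := by
  have ha : a ≠ 0 := by rintro rfl; simp at h
  set e₀ := unitVec a
  set e₂ := unitVec (a ⨯₃ b)
  have h₀₀ : e₀ ⬝ᵥ e₀ = 1 := unitVec_dotProduct_self ha
  have h₂₂ : e₂ ⬝ᵥ e₂ = 1 := unitVec_dotProduct_self h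
  have h₀₂ : e₀ ⬝ᵥ e₂ = 0 := by simp [e₀, e₂, unitVec, dot_self_cross]
  have h₁₁ : e₂ ⨯₃ e₀ ⬝ᵥ e₂ ⨯₃ e₀ = 1 := by
    rw [cross_dot_cross, h₂₂, h₀₀, dotProduct_comm e₂, h₀₂]; ring
  have h₁₀ : e₂ ⨯₃ e₀ ⬝ᵥ e₀ = 0 := by rw [dotProduct_comm, dot_cross_self]
  have h₁₂ : e₂ ⨯₃ e₀ ⬝ᵥ e₂ = 0 := by rw [dotProduct_comm, dot_self_cross]
  refine ⟨?_, ?_⟩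
  · rw [orientedFrame, transpose_transpose]
    ext i j
    change ![e₀, e₂ ⨯₃ e₀, e₂] i ⬝ᵥ ![e₀, e₂ ⨯₃ e₀, e₂] j = (1 : Matrix (Fin 3) (Fin 3) ℝ) i j
    fin_cases i <;> fin_cases j <;>
      simp [dotProduct_comm e₂ e₀, dotProduct_comm _ (e₂ ⨯₃ e₀), *]
  · rw [orientedFrame, det_transpose]
    have := triple_product_eq_det e₀ (e₂ ⨯₃ e₀) e₂
    rw [triple_product_permutation] at this
    exact this.symm.trans h₁₁

theorem exists_SO3_UT3_transpose_mul {A : Matrix (Fin 3) (Fin 3) ℝ} (h : Aᵀ 0 ⨯₃ Aᵀ 1 ≠ 0) :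
    ∃ R, SO3 R ∧ UT3 (Rᵀ * A) ∧ 0 < (Rᵀ * A) 0 0 ∧ 0 < (Rᵀ * A) 1 1 := by
  refine ⟨orientedFrame (Aᵀ 0) (Aᵀ 1), SO3_orientedFrame h, ?_⟩
  set a := Aᵀ 0
  set b := Aᵀ 1
  have ha : a ≠ 0 := by rintro h0; simp [h0] at h
  set e₀ := unitVec a
  set e₂ := unitVec (a ⨯₃ b)
  have hc : 0 < (√(a ⬝ᵥ a))⁻¹ := inv_pos.mpr (Real.sqrt_pos.mpr (dotProduct_self_pos ha))
  refine ⟨UT3_iff.mpr ⟨?_, ?_, ?_⟩, ?_, ?_⟩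
  · change e₂ ⨯₃ e₀ ⬝ᵥ a = 0
    simp [e₀, unitVec, dotProduct_comm _ a, dot_cross_self]
  · change e₂ ⬝ᵥ a = 0
    simp [e₂, unitVec, dotProduct_comm _ a, dot_self_cross]
  · change e₂ ⬝ᵥ b = 0
    simp [e₂, unitVec, dotProduct_comm _ b, dot_cross_self]
  · change 0 < e₀ ⬝ᵥ a
    rw [dotProduct_comm, dotProduct_unitVec]
    exact Real.sqrt_pos.mpr (dotProduct_self_pos ha)
  · change 0 < e₂ ⨯₃ e₀ ⬝ᵥ b
    rw [dotProduct_comm, triple_product_permutation]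
    change 0 < unitVec (a ⨯₃ b) ⬝ᵥ ((√(a ⬝ᵥ a))⁻¹ • a) ⨯₃ b
    rw [map_smul, LinearMap.smul_apply, dotProduct_smul, dotProduct_comm (unitVec _), dotProduct_unitVec]
    exact mul_pos hc (Real.sqrt_pos.mpr (dotProduct_self_pos h))

end OrientedFrame

section ScrewPart

variable {U : Matrix (Fin 3) (Fin 3) ℝ}

theorem skew3_mul_lower_entries (hU : UT3 U) (q : Fin 3 → ℝ) :
    (skew3 q * U) 1 0 = q 2 * U 0 0 ∧ (skew3 q * U) 2 0 = -(q 1 * U 0 0) ∧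
      (skew3 q * U) 2 1 = q 0 * U 1 1 - q 1 * U 0 1 := by
  obtain ⟨u₁₀, u₂₀, u₂₁⟩ := UT3_iff.mp hU
  refine ⟨?_, ?_, ?_⟩ <;> simp [skew3, Matrix.mul_apply, Fin.sum_univ_three, u₁₀, u₂₀, u₂₁]; ring

theorem UT3_sub_skew3_mul_iff (hU : UT3 U) (h₀ : U 0 0 ≠ 0) (h₁ : U 1 1 ≠ 0)
    (C : Matrix (Fin 3) (Fin 3) ℝ) (q : Fin 3 → ℝ) :
    UT3 (C - skew3 q * U) ↔
      q = ![(C 2 1 - C 2 0 * U 0 1 / U 0 0) / U 1 1, -(C 2 0 / U 0 0), C 1 0 / U 0 0] := by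
  obtain ⟨s₁₀, s₂₀, s₂₁⟩ := skew3_mul_lower_entries hU q
  rw [UT3_iff, Matrix.sub_apply, Matrix.sub_apply, Matrix.sub_apply, s₁₀, s₂₀, s₂₁]
  constructor
  · rintro ⟨h₁₀, h₂₀, h₂₁⟩
    have hq₂ : q 2 = C 1 0 / U 0 0 := by field_simp; linarith
    have hq₁ : q 1 = -(C 2 0 / U 0 0) := by field_simp; linarith
    have hq₀ : q 0 = (C 2 1 - C 2 0 * U 0 1 / U 0 0) / U 1 1 := by
      field_simp
      linear_combination (-U 0 0) * h₂₁ + U 0 1 * h₂₀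
    ext i
    fin_cases i <;> assumption
  · rintro rfl
    refine ⟨?_, ?_, ?_⟩ <;> simp <;> field_simp <;> ring

theorem existsUnique_eq_skew3_mul_add (hU : UT3 U) (h₀ : U 0 0 ≠ 0) (h₁ : U 1 1 ≠ 0)
    (C : Matrix (Fin 3) (Fin 3) ℝ) :
    ∃! x : (Fin 3 → ℝ) × Matrix (Fin 3) (Fin 3) ℝ, UT3 x.2 ∧ C = skew3 x.1 * U + x.2 := by
  obtain ⟨q₀, hq₀⟩ : ∃ q₀, ∀ q, UT3 (C - skew3 q * U) ↔ q = q₀ :=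
    ⟨_, UT3_sub_skew3_mul_iff hU h₀ h₁ C⟩
  refine ⟨(q₀, C - skew3 q₀ * U), ⟨(hq₀ q₀).mpr rfl, (add_sub_cancel _ _).symm⟩, ?_⟩
  rintro ⟨q, V⟩ ⟨hV, rfl⟩
  obtain rfl : q = q₀ := (hq₀ q).mp (by rwa [add_sub_cancel_left])
  simp

end ScrewPart

theorem stmt5_general (A B : Matrix (Fin 3) (Fin 3) ℝ)
    (h2 : cross3 (fun i => A i 0) (fun i => A i 1) ≠ 0) :
    ∃! x : (Matrix (Fin 3) (Fin 3) ℝ × (Fin 3 → ℝ)) ×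
           (Matrix (Fin 3) (Fin 3) ℝ × Matrix (Fin 3) (Fin 3) ℝ),
      SO3 x.1.1 ∧ UT3 x.2.1 ∧ UT3 x.2.2 ∧
      0 < x.2.1 0 0 ∧ 0 < x.2.1 1 1 ∧
      A = x.1.1 * x.2.1 ∧
      B = skew3 x.1.2 * x.1.1 * x.2.1 + x.1.1 * x.2.2 := by
  obtain ⟨R, hR, hU, hU₀, hU₁⟩ := exists_SO3_UT3_transpose_mul h2
  generalize hRA : Rᵀ * A = U at hU hU₀ hU₁
  obtain ⟨⟨q, V⟩, ⟨hV, hC⟩, hqV⟩ := existsUnique_eq_skew3_mul_add hU hU₀.ne' hU₁.ne' (Rᵀ * B)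
  refine ⟨((R, R *ᵥ q), (U, V)), ⟨hR, hU, hV, hU₀, hU₁, hR.eq_mul_iff.mpr hRA, ?_⟩, ?_⟩
  · rwa [hR.eq_skew3_mul_mul_add_iff, mulVec_mulVec, hR.1, one_mulVec]
  rintro ⟨⟨R', p⟩, U', V'⟩ ⟨hR', hU', hV', hU₀', hU₁', hA, hB⟩
  obtain rfl : R = R' :=
    hR.eq_of_mul_eq_mul hR' hU hU' hU₀ hU₁ hU₀' hU₁' ((hR.eq_mul_iff.mpr hRA).symm.trans hA)
  obtain rfl : U = U' := hRA.symm.trans (hR.eq_mul_iff.mp hA)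
  obtain ⟨hq, rfl⟩ : Rᵀ *ᵥ p = q ∧ V' = V :=
    Prod.ext_iff.mp (hqV (Rᵀ *ᵥ p, V') ⟨hV', hR.eq_skew3_mul_mul_add_iff.mp hB⟩)
  rw [← hq, mulVec_mulVec, hR.mul_transpose, one_mulVec]

theorem stmt5 (A B : Matrix (Fin 3) (Fin 3) ℝ)
    (h1 : (fun i => A i 0) ≠ 0)
    (h2 : cross3 (fun i => A i 0) (fun i => A i 1) ≠ 0) :
    ∃! x : (Matrix (Fin 3) (Fin 3) ℝ × (Fin 3 → ℝ)) ×
           (Matrix (Fin 3) (Fin 3) ℝ × Matrix (Fin 3) (Fin 3) ℝ),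
      SO3 x.1.1 ∧ UT3 x.2.1 ∧ UT3 x.2.2 ∧
      0 < x.2.1 0 0 ∧ 0 < x.2.1 1 1 ∧
      A = x.1.1 * x.2.1 ∧
      B = skew3 x.1.2 * x.1.1 * x.2.1 + x.1.1 * x.2.2 :=
  stmt5_general A B h2
end

section
/- In the SU-decomposition of a regular Ξ with upper block columns α₋, α₀, the third column r₃ of R is parallel to α₋ × α₀; hence r₃ is orthogonal to the screw-axis directions of both the first and second screws. -/
open Matrix

/-!
Writing `A = R U₁` column by column, upper triangularity gives `α₋ = u₀₀ r₁` and
`α₀ = u₀₁ r₁ + u₁₁ r₂`, so `α₋ × α₀ = u₀₀ u₁₁ (r₁ × r₂) = u₀₀ u₁₁ r₃` because `R ∈ SO(3)`.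
Orthogonality of `R` gives `r₃ · (R U₁)ⱼ = (U₁)₂ⱼ`, which vanishes for `j = 0, 1`.
-/

theorem cross3_smul_smul_add (a b c : ℝ) (x y : Fin 3 → ℝ) :
    cross3 (a • x) (b • x + c • y) = (a * c) • cross3 x y := by
  ext i
  fin_cases i <;> simp [cross3] <;> ring

theorem dot3_col_mul_col {R : Matrix (Fin 3) (Fin 3) ℝ} (hR : Rᵀ * R = 1)
    (M : Matrix (Fin 3) (Fin 3) ℝ) (k j : Fin 3) :
    dot3 (fun i => R i k) (fun i => (R * M) i j) = M k j := by
  have h : dot3 (fun i => R i k) (fun i => (R * M) i j) = (Rᵀ * (R * M)) k j := by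
    simp [dot3, mul_apply]
  rw [h, ← Matrix.mul_assoc, hR, Matrix.one_mul]

theorem SO3.adjugate_eq_transpose {R : Matrix (Fin 3) (Fin 3) ℝ} (hR : SO3 R) :
    adjugate R = Rᵀ :=
  calc adjugate R = (Rᵀ * R) * adjugate R := by rw [hR.1, Matrix.one_mul]
    _ = Rᵀ := by rw [Matrix.mul_assoc, mul_adjugate, hR.2, one_smul, Matrix.mul_one]

theorem SO3.col_two_eq_cross3 {R : Matrix (Fin 3) (Fin 3) ℝ} (hR : SO3 R) :
    (fun i => R i 2) = cross3 (fun i => R i 0) (fun i => R i 1) := by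
  have h := hR.adjugate_eq_transpose
  rw [adjugate_fin_three] at h
  ext i
  have hi := congrFun (congrFun h 2) i
  fin_cases i <;> simp [cross3] at hi ⊢ <;> linarith

theorem UT3.mul_col_zero {U : Matrix (Fin 3) (Fin 3) ℝ} (hU : UT3 U)
    (R : Matrix (Fin 3) (Fin 3) ℝ) :
    (fun i => (R * U) i 0) = U 0 0 • fun i => R i 0 := by
  ext i
  simp [mul_apply, Fin.sum_univ_three, hU 1 0 (by decide), hU 2 0 (by decide), mul_comm]

theorem UT3.mul_col_one {U : Matrix (Fin 3) (Fin 3) ℝ} (hU : UT3 U)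
    (R : Matrix (Fin 3) (Fin 3) ℝ) :
    (fun i => (R * U) i 1) = U 0 1 • (fun i => R i 0) + U 1 1 • fun i => R i 1 := by
  ext i
  simp [mul_apply, Fin.sum_univ_three, hU 2 1 (by decide), mul_comm]

theorem stmt11_general (A R U₁ : Matrix (Fin 3) (Fin 3) ℝ)
    (hR : SO3 R) (hU₁ : UT3 U₁)
    (hpos1 : 0 < U₁ 0 0) (hpos2 : 0 < U₁ 1 1)
    (hA : A = R * U₁) :
    (∃ c : ℝ, (fun i => R i 2) =
        c • cross3 (fun i => A i 0) (fun i => A i 1)) ∧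
    dot3 (fun i => R i 2) (fun i => A i 0) = 0 ∧
    dot3 (fun i => R i 2) (fun i => A i 1) = 0 := by
  subst hA
  have hcross : cross3 (fun i => (R * U₁) i 0) (fun i => (R * U₁) i 1) =
      (U₁ 0 0 * U₁ 1 1) • fun i => R i 2 := by
    rw [hU₁.mul_col_zero, hU₁.mul_col_one, cross3_smul_smul_add, ← hR.col_two_eq_cross3]
  have hne : U₁ 0 0 * U₁ 1 1 ≠ 0 := by positivity
  refine ⟨⟨(U₁ 0 0 * U₁ 1 1)⁻¹, ?_⟩, ?_, ?_⟩
  · rw [hcross, smul_smul, inv_mul_cancel₀ hne, one_smul]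
  · rw [dot3_col_mul_col hR.1]
    exact hU₁ 2 0 (by decide)
  · rw [dot3_col_mul_col hR.1]
    exact hU₁ 2 1 (by decide)

theorem stmt11 (A B R U₁ U₂ : Matrix (Fin 3) (Fin 3) ℝ) (p : Fin 3 → ℝ)
    (hreg1 : (fun i => A i 0) ≠ 0)
    (hreg2 : cross3 (fun i => A i 0) (fun i => A i 1) ≠ 0)
    (hR : SO3 R) (hU₁ : UT3 U₁) (hU₂ : UT3 U₂)
    (hpos1 : 0 < U₁ 0 0) (hpos2 : 0 < U₁ 1 1)
    (hA : A = R * U₁) (hB : B = skew3 p * R * U₁ + R * U₂) :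
    (∃ c : ℝ, (fun i => R i 2) =
        c • cross3 (fun i => A i 0) (fun i => A i 1)) ∧
    dot3 (fun i => R i 2) (fun i => A i 0) = 0 ∧
    dot3 (fun i => R i 2) (fun i => A i 1) = 0 :=
  stmt11_general A R U₁ hR hU₁ hpos1 hpos2 hA
end
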